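/- If a unitary U saturates the block-wise fidelity bound Tr[A U ρ U†] = Σ_n Σ_{m=1}^{d_n} w_{n,m} for a block-diagonal density matrix ρ with strictly decreasing eigenvalues within each block, then U maps the eigenvector of ρ with m-th largest eigenvalue in block n into the +1-eigenspace of A restricted to H_n for every m ≤ d_n; consequently the same U also saturates the bound for any other block-diagonal density matrix ρ' whose eigenvectors coincide with those of ρ with the same ordering of eigenvalues. -/

import Mathlib

/-!
Let `V = U E`, where `E` is the unitary with columns `e_i`. Then `B = V† A V` is again a star
projection, so its diagonal entries `B_ii = ⟨U e_i, A U e_i⟩` lie in `[0, 1]`; since `V` is block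
diagonal, their sum over block `n` is `Tr A_n = rank A_n = d_n`. The fidelity equals
`Σ_i w_i B_ii`. Within one block, a weight vector that is strictly decreasing, paired with
`0 ≤ F ≤ 1` subject to `Σ F = d`, gives at most the sum of the `d` largest weights, and equality
holds only when `F` is the indicator of the first `d` positions: compare with a threshold weight
separating the first `d` weights from the rest. Saturation therefore forces `B_ii = 1` on the
first `d_n` positions of each block and `B_ii = 0` elsewhere. The first condition means
`A U e_i = U e_i`, and together they determine the fidelity `Σ_i w'_i B_ii` for every other
choice of weights `w'`.
-/

open Matrix ComplexOrder

def blk {N : ℕ} {M : Fin (N + 1) → ℕ}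
    (X : Matrix ((n : Fin (N + 1)) × Fin (M n)) ((n : Fin (N + 1)) × Fin (M n)) ℂ)
    (n : Fin (N + 1)) : Matrix (Fin (M n)) (Fin (M n)) ℂ :=
  fun a b => X ⟨n, a⟩ ⟨n, b⟩

namespace Finset

variable {ι : Type*} [DecidableEq ι] {s : Finset ι} {w F : ι → ℝ}

theorem mul_ite_sub_nonneg {t : ℝ} (hts : ∀ i ∈ s, t < w i) (hts' : ∀ i ∉ s, w i < t)
    (hF0 : ∀ i, 0 ≤ F i) (hF1 : ∀ i, F i ≤ 1) (i : ι) :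
    0 ≤ (w i - t) * ((if i ∈ s then 1 else 0) - F i) := by
  split_ifs with hi
  · exact mul_nonneg (sub_nonneg.2 (hts i hi).le) (sub_nonneg.2 (hF1 i))
  · exact mul_nonneg_of_nonpos_of_nonpos (sub_nonpos.2 (hts' i hi).le) (by linarith [hF0 i])

variable [Fintype ι]

theorem sum_sub_sum_mul_eq_sum_mul (t : ℝ) (hF : ∑ i, F i = #s) :
    ∑ i ∈ s, w i - ∑ i, w i * F i = ∑ i, (w i - t) * ((if i ∈ s then 1 else 0) - F i) := by
  simp only [mul_sub, sub_mul, mul_ite, mul_one, mul_zero, sum_sub_distrib, ← sum_filter,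
    filter_mem_eq_inter, univ_inter, sum_const, nsmul_eq_mul, ← mul_sum, hF]
  ring

theorem exists_threshold_of_separated (hsep : ∀ i ∈ s, ∀ j ∉ s, w j < w i) :
    ∃ t, (∀ i ∈ s, t < w i) ∧ ∀ j ∉ s, w j < t := by
  obtain ⟨t, hlt, hgt⟩ := exists_between' (sᶜ.image w) (s.image w) (by
    simp only [mem_image, mem_compl]
    rintro _ ⟨j, hj, rfl⟩ _ ⟨i, hi, rfl⟩
    exact hsep i hi j hj)
  exact ⟨t, fun i hi => hgt _ (mem_image_of_mem w hi),
    fun j hj => hlt _ (mem_image_of_mem w (mem_compl.2 hj))⟩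

theorem sum_mul_le_sum_of_separated (hsep : ∀ i ∈ s, ∀ j ∉ s, w j < w i)
    (hF0 : ∀ i, 0 ≤ F i) (hF1 : ∀ i, F i ≤ 1) (hF : ∑ i, F i = #s) :
    ∑ i, w i * F i ≤ ∑ i ∈ s, w i := by
  obtain ⟨t, hts, hts'⟩ := exists_threshold_of_separated hsep
  have := sum_sub_sum_mul_eq_sum_mul (w := w) t hF
  linarith [sum_nonneg (s := univ) fun i _ => mul_ite_sub_nonneg hts hts' hF0 hF1 i]

theorem eq_ite_of_sum_mul_eq_sum (hsep : ∀ i ∈ s, ∀ j ∉ s, w j < w i)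
    (hF0 : ∀ i, 0 ≤ F i) (hF1 : ∀ i, F i ≤ 1) (hF : ∑ i, F i = #s)
    (h : ∑ i, w i * F i = ∑ i ∈ s, w i) (i : ι) : F i = if i ∈ s then 1 else 0 := by
  obtain ⟨t, hts, hts'⟩ := exists_threshold_of_separated hsep
  have hzero := (sum_eq_zero_iff_of_nonneg fun i _ => mul_ite_sub_nonneg hts hts' hF0 hF1 i).1
    (by rw [← sum_sub_sum_mul_eq_sum_mul t hF, h, sub_self]) i (mem_univ i)
  have hwt : w i - t ≠ 0 := by
    by_cases hi : i ∈ s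
    · linarith [hts i hi]
    · linarith [hts' i hi]
  linarith [(mul_eq_zero.1 hzero).resolve_left hwt]

end Finset

theorem eq_ite_of_sum_mul_eq_sum_blockwise {o : Type*} [Fintype o] {k d : o → ℕ}
    {w F : (n : o) → Fin (k n) → ℝ} (hw : ∀ n, StrictAnti (w n)) (hF0 : ∀ n m, 0 ≤ F n m)
    (hF1 : ∀ n m, F n m ≤ 1) (hF : ∀ n, ∑ m, F n m = d n)
    (h : ∑ n, ∑ m, w n m * F n m =
      ∑ n, ∑ m ∈ Finset.univ.filter (fun m : Fin (k n) => (m : ℕ) < d n), w n m)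
    (n : o) (m : Fin (k n)) : F n m = if (m : ℕ) < d n then 1 else 0 := by
  set s : ∀ n, Finset (Fin (k n)) := fun n => Finset.univ.filter fun m => (m : ℕ) < d n
  have hsep : ∀ n, ∀ i ∈ s n, ∀ j ∉ s n, w n j < w n i := fun n i hi j hj =>
    hw n (by simp only [s, Finset.mem_filter, Finset.mem_univ, true_and] at hi hj; omega)
  have hdk : ∀ n, d n ≤ k n := fun n => by
    have := Finset.sum_le_sum fun m (_ : m ∈ Finset.univ) => hF1 n m
    rw [hF, Finset.sum_const, Finset.card_univ, Fintype.card_fin, nsmul_one] at this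
    exact_mod_cast this
  have hcard : ∀ n, ∑ m, F n m = (s n).card := fun n => by
    rw [hF, Fin.card_filter_val_lt, min_eq_right (hdk n)]
  have hblock := (Finset.sum_eq_sum_iff_of_le fun n _ =>
    Finset.sum_mul_le_sum_of_separated (hsep n) (hF0 n) (hF1 n) (hcard n)).1 h n (Finset.mem_univ n)
  simpa [s] using Finset.eq_ite_of_sum_mul_eq_sum (hsep n) (hF0 n) (hF1 n) (hcard n) hblock m

theorem IsStarProjection.star_left_conjugate {R : Type*} [Ring R] [StarRing R] {p u : R}
    (hp : IsStarProjection p) (hu : u * star u = 1) : IsStarProjection (star u * p * u) where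
  isIdempotentElem := by
    simp only [IsIdempotentElem, mul_assoc]
    rw [← mul_assoc u, hu, one_mul, ← mul_assoc p p u, hp.isIdempotentElem.eq]
  isSelfAdjoint := by
    rw [IsSelfAdjoint, star_mul, star_mul, star_star, hp.isSelfAdjoint.star_eq, mul_assoc]

section StarProjection

variable {𝕜 n : Type*} [RCLike 𝕜] [Fintype n] {P : Matrix n n 𝕜}

theorem IsStarProjection.posSemidef (hP : IsStarProjection P) : P.PosSemidef := by
  open scoped MatrixOrder in exact nonneg_iff_posSemidef.1 hP.nonneg

theorem IsStarProjection.diag_nonneg (hP : IsStarProjection P) (i : n) : 0 ≤ P i i :=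
  hP.posSemidef.diag_nonneg

variable [DecidableEq n]

theorem IsStarProjection.diag_le_one (hP : IsStarProjection P) (i : n) : P i i ≤ 1 := by
  have := hP.one_sub.posSemidef.diag_nonneg (i := i)
  rwa [Matrix.sub_apply, one_apply_eq, sub_nonneg] at this

theorem IsStarProjection.mulVec_single_one_of_diag_eq_one (hP : IsStarProjection P) {i : n}
    (hi : P i i = 1) : P *ᵥ Pi.single i 1 = Pi.single i 1 := by
  have := (hP.one_sub.posSemidef.dotProduct_mulVec_zero_iff (Pi.single i 1)).1 (by simp [hi])
  rwa [sub_mulVec, one_mulVec, sub_eq_zero, eq_comm] at this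

end StarProjection

theorem IsStarProjection.diag_eq_ite_of_saturation {o : Type*} [Fintype o] [DecidableEq o]
    {k d : o → ℕ}
    {B : Matrix (Σ n, Fin (k n)) (Σ n, Fin (k n)) ℂ} (hB : IsStarProjection B)
    (hBd : ∀ n, ∑ m, B ⟨n, m⟩ ⟨n, m⟩ = d n) {w : (n : o) → Fin (k n) → ℝ}
    (hw : ∀ n, StrictAnti (w n))
    (h : ∑ i, (w i.1 i.2 : ℂ) * B i i =
      ((∑ n, ∑ m ∈ Finset.univ.filter (fun m : Fin (k n) => (m : ℕ) < d n), w n m : ℝ) : ℂ))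
    (i : Σ n, Fin (k n)) : B i i = if (i.2 : ℕ) < d i.1 then 1 else 0 := by
  set F : (n : o) → Fin (k n) → ℝ := fun n m => (B ⟨n, m⟩ ⟨n, m⟩).re
  have hBF : ∀ i, B i i = F i.1 i.2 := fun i =>
    (IsHermitian.coe_re_apply_self hB.isSelfAdjoint i).symm
  simp only [hBF, Fintype.sum_sigma] at hBd h
  have hF := eq_ite_of_sum_mul_eq_sum_blockwise hw
    (fun n m => by exact_mod_cast hBF ⟨n, m⟩ ▸ hB.diag_nonneg _)
    (fun n m => by exact_mod_cast hBF ⟨n, m⟩ ▸ hB.diag_le_one _)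
    (fun n => by exact_mod_cast hBd n) (by exact_mod_cast h) i.1 i.2
  rw [hBF, hF]
  split_ifs <;> simp

namespace Matrix

theorem trace_eq_rank_of_isIdempotentElem {K n : Type*} [Field K] [Fintype n] [DecidableEq n]
    {P : Matrix n n K} (hP : IsIdempotentElem P) : P.trace = P.rank := by
  have hP' : IsIdempotentElem (toLin' P) := by
    rw [IsIdempotentElem, Module.End.mul_eq_comp, ← toLin'_mul, hP.eq]
  rw [← trace_toLin'_eq, (LinearMap.IsIdempotentElem.isProj_range _ hP').trace]
  rfl

section BlockDiagonal

variable {o : Type*} {m : o → Type*} {α : Type*}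

def IsBlockDiagonal' [Zero α] (X : Matrix (Σ k, m k) (Σ k, m k) α) : Prop :=
  ∀ i j, i.1 ≠ j.1 → X i j = 0

theorem IsBlockDiagonal'.conjTranspose [AddMonoid α] [StarAddMonoid α]
    {X : Matrix (Σ k, m k) (Σ k, m k) α} (hX : X.IsBlockDiagonal') : Xᴴ.IsBlockDiagonal' :=
  fun i j h => by rw [conjTranspose_apply, hX j i (Ne.symm h), star_zero]

variable [Fintype o] [∀ k, Fintype (m k)]

theorem IsBlockDiagonal'.mul [NonUnitalNonAssocSemiring α] {X Y : Matrix (Σ k, m k) (Σ k, m k) α}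
    (hX : X.IsBlockDiagonal') (hY : Y.IsBlockDiagonal') : (X * Y).IsBlockDiagonal' :=
  fun i j h => Finset.sum_eq_zero fun k _ => by
    change X i k * Y k j = 0
    by_cases hk : i.1 = k.1
    · rw [hY k j (hk ▸ h), mul_zero]
    · rw [hX i k hk, zero_mul]

theorem IsBlockDiagonal'.blockDiag'_mul [NonUnitalNonAssocSemiring α]
    {X : Matrix (Σ k, m k) (Σ k, m k) α} (hX : X.IsBlockDiagonal')
    (Y : Matrix (Σ k, m k) (Σ k, m k) α) (k : o) :
    blockDiag' (X * Y) k = blockDiag' X k * blockDiag' Y k := by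
  ext a b
  simp only [blockDiag'_apply, mul_apply]
  rw [← Finset.univ_sigma_univ, Finset.sum_sigma, Finset.sum_eq_single k]
  · exact fun k' _ hk' => Finset.sum_eq_zero fun c _ => by rw [hX _ _ (Ne.symm hk'), zero_mul]
  · simp

theorem IsBlockDiagonal'.isIdempotentElem_blockDiag' [NonUnitalNonAssocSemiring α]
    {X : Matrix (Σ k, m k) (Σ k, m k) α} (hX : X.IsBlockDiagonal') (hX2 : IsIdempotentElem X)
    (k : o) : IsIdempotentElem (blockDiag' X k) := by
  rw [IsIdempotentElem, ← hX.blockDiag'_mul, hX2.eq]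

variable [DecidableEq o]

theorem IsBlockDiagonal'.trace_blockDiag'_star_mul_mul [∀ k, DecidableEq (m k)] [CommSemiring α]
    [StarRing α] {A V : Matrix (Σ k, m k) (Σ k, m k) α} (hA : A.IsBlockDiagonal')
    (hV : V.IsBlockDiagonal') (hVV : V * star V = 1) (k : o) :
    (blockDiag' (star V * A * V) k).trace = (blockDiag' A k).trace := by
  have hV' : (star V).IsBlockDiagonal' := hV.conjTranspose
  have hW : blockDiag' V k * blockDiag' (star V) k = 1 := by
    rw [← hV.blockDiag'_mul, hVV, blockDiag'_one, Pi.one_apply]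
  rw [(hV'.mul hA).blockDiag'_mul, hV'.blockDiag'_mul, trace_mul_cycle, hW, one_mul]

end BlockDiagonal

section Conjugation

variable {n R : Type*} [Fintype n] [DecidableEq n] [CommRing R] [StarRing R]

theorem transpose_of_mem_unitaryGroup_of_orthonormal {e : n → n → R}
    (he : ∀ i j, star (e i) ⬝ᵥ e j = if i = j then 1 else 0) : (of e)ᵀ ∈ unitaryGroup n R :=
  mem_unitaryGroup_iff'.2 <| by
    ext i j
    simpa [mul_apply, dotProduct, one_apply] using he i j

theorem sum_smul_vecMulVec_star_eq (e : n → n → R) (c : n → R) :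
    ∑ i, c i • vecMulVec (e i) (star (e i)) = (of e)ᵀ * diagonal c * star (of e)ᵀ := by
  ext a b
  simp [sum_apply, mul_apply, vecMulVec_apply, diagonal, mul_left_comm, mul_assoc]

theorem trace_mul_conj_sum_smul_vecMulVec (A U : Matrix n n R) (e : n → n → R) (c : n → R) :
    (A * (U * (∑ i, c i • vecMulVec (e i) (star (e i))) * Uᴴ)).trace =
      ∑ i, c i * (star (U * (of e)ᵀ) * A * (U * (of e)ᵀ)) i i := by
  set V := U * (of e)ᵀ
  have hconj : U * ((of e)ᵀ * diagonal c * star (of e)ᵀ) * Uᴴ = V * diagonal c * star V := by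
    simp only [V, star_mul, star_eq_conjTranspose, mul_assoc]
  rw [sum_smul_vecMulVec_star_eq, hconj, ← mul_assoc, trace_mul_comm, ← mul_assoc, ← mul_assoc]
  simp [trace, mul_diagonal, mul_comm]

theorem mulVec_mulVec_eq_self_of_conj {A V : Matrix n n R} (hV : V * star V = 1) {x : n → R}
    (h : (star V * A * V) *ᵥ x = x) : A *ᵥ (V *ᵥ x) = V *ᵥ x :=
  calc A *ᵥ (V *ᵥ x) = V *ᵥ ((star V * A * V) *ᵥ x) := by
        simp only [mulVec_mulVec, ← mul_assoc, hV, one_mul]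
    _ = V *ᵥ x := by rw [h]

end Conjugation

end Matrix

theorem saturation_of_blockwise_bound_general {N : ℕ} {M : Fin (N + 1) → ℕ}
    (A U : Matrix ((n : Fin (N + 1)) × Fin (M n)) ((n : Fin (N + 1)) × Fin (M n)) ℂ)
    (hAblk : ∀ i j, i.1 ≠ j.1 → A i j = 0)
    (hUblk : ∀ i j, i.1 ≠ j.1 → U i j = 0)
    (hA : A * A = A) (hAh : A.IsHermitian)
    (hU : U ∈ Matrix.unitaryGroup ((n : Fin (N + 1)) × Fin (M n)) ℂ)
    (d : Fin (N + 1) → ℕ) (hd : ∀ n, (blk A n).rank = d n)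
    (e : ((n : Fin (N + 1)) × Fin (M n)) → ((n : Fin (N + 1)) × Fin (M n)) → ℂ)
    (horth : ∀ i j, star (e i) ⬝ᵥ e j = if i = j then (1 : ℂ) else 0)
    (hblksupp : ∀ i k, k.1 ≠ i.1 → e i k = 0)
    (w : (n : Fin (N + 1)) → Fin (M n) → ℝ)
    (hstrict : ∀ n, StrictAnti (w n))
    (hsat : (A * (U * (∑ i, (w i.1 i.2 : ℂ) • vecMulVec (e i) (star (e i))) * Uᴴ)).trace =
      ((∑ n : Fin (N + 1),
        ∑ m ∈ Finset.univ.filter (fun m : Fin (M n) => (m : ℕ) < d n), w n m : ℝ) : ℂ)) :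
    (∀ i : (n : Fin (N + 1)) × Fin (M n), (i.2 : ℕ) < d i.1 →
      A.mulVec (U.mulVec (e i)) = U.mulVec (e i)) ∧
    (∀ w' : (n : Fin (N + 1)) → Fin (M n) → ℝ,
      (∀ n, Antitone (w' n)) → (∀ n m, 0 ≤ w' n m) →
      (A * (U * (∑ i, (w' i.1 i.2 : ℂ) • vecMulVec (e i) (star (e i))) * Uᴴ)).trace =
        ((∑ n : Fin (N + 1),
          ∑ m ∈ Finset.univ.filter (fun m : Fin (M n) => (m : ℕ) < d n), w' n m : ℝ) : ℂ)) := by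
  classical
  set V := U * (of e)ᵀ
  have hVV : V * star V = 1 :=
    mem_unitaryGroup_iff.1 (Submonoid.mul_mem _ hU (transpose_of_mem_unitaryGroup_of_orthonormal horth))
  have hVblk : V.IsBlockDiagonal' := IsBlockDiagonal'.mul hUblk fun i k h => hblksupp k i h
  set B := star V * A * V
  have hB : IsStarProjection B := IsStarProjection.star_left_conjugate ⟨hA, hAh⟩ hVV
  have hBd : ∀ n, ∑ m, B ⟨n, m⟩ ⟨n, m⟩ = d n := fun n => by
    rw [← hd n, show blk A n = blockDiag' A n from rfl]
    exact (IsBlockDiagonal'.trace_blockDiag'_star_mul_mul hAblk hVblk hVV n).trans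
      (trace_eq_rank_of_isIdempotentElem (IsBlockDiagonal'.isIdempotentElem_blockDiag' hAblk hA n))
  have htr : ∀ c : (n : Fin (N + 1)) → Fin (M n) → ℝ,
      (A * (U * (∑ i, (c i.1 i.2 : ℂ) • vecMulVec (e i) (star (e i))) * Uᴴ)).trace =
        ∑ i, (c i.1 i.2 : ℂ) * B i i := fun c => trace_mul_conj_sum_smul_vecMulVec A U e _
  have hdiag := hB.diag_eq_ite_of_saturation hBd hstrict ((htr w).symm.trans hsat)
  refine ⟨fun i hi => ?_, fun w' _ _ => ?_⟩
  · have hVi : V *ᵥ Pi.single i 1 = U *ᵥ e i := by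
      rw [← mulVec_mulVec, mulVec_single_one]
      rfl
    rw [← hVi]
    exact mulVec_mulVec_eq_self_of_conj hVV
      (hB.mulVec_single_one_of_diag_eq_one (by rw [hdiag, if_pos hi]))
  · rw [htr w', Fintype.sum_sigma]
    push_cast
    simp [hdiag, Finset.sum_filter]

/-- If a block-preserving unitary `U` saturates the block-wise fidelity bound
`Tr[A U ρ U†] = Σₙ Σ_{m=1}^{dₙ} w_{n,m}` for a block-diagonal density matrix
`ρ = Σ w_{n,m} |e_{n,m}⟩⟨e_{n,m}|` with strictly decreasing eigenvalues within
each block, then `U` maps each eigenvector `e_{n,m}` with `m ≤ dₙ` into the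
`+1`-eigenspace of `A`; consequently `U` also saturates the bound for any
other block-diagonal density matrix `ρ'` with the same eigenvectors and
non-increasingly ordered eigenvalues `w'`. -/
theorem saturation_of_blockwise_bound {N : ℕ} {M : Fin (N + 1) → ℕ}
    (A U : Matrix ((n : Fin (N + 1)) × Fin (M n)) ((n : Fin (N + 1)) × Fin (M n)) ℂ)
    (hAblk : ∀ i j, i.1 ≠ j.1 → A i j = 0)
    (hUblk : ∀ i j, i.1 ≠ j.1 → U i j = 0)
    (hA : A * A = A) (hAh : A.IsHermitian)
    (hU : U ∈ Matrix.unitaryGroup ((n : Fin (N + 1)) × Fin (M n)) ℂ)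
    (d : Fin (N + 1) → ℕ) (hd : ∀ n, (blk A n).rank = d n)
    (e : ((n : Fin (N + 1)) × Fin (M n)) → ((n : Fin (N + 1)) × Fin (M n)) → ℂ)
    (horth : ∀ i j, star (e i) ⬝ᵥ e j = if i = j then (1 : ℂ) else 0)
    (hblksupp : ∀ i k, k.1 ≠ i.1 → e i k = 0)
    (w : (n : Fin (N + 1)) → Fin (M n) → ℝ)
    (hstrict : ∀ n, StrictAnti (w n)) (hw0 : ∀ n m, 0 ≤ w n m)
    (hwtr : ∑ i : (n : Fin (N + 1)) × Fin (M n), w i.1 i.2 = 1)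
    (hsat : (A * (U * (∑ i, (w i.1 i.2 : ℂ) • vecMulVec (e i) (star (e i))) * Uᴴ)).trace =
      ((∑ n : Fin (N + 1),
        ∑ m ∈ Finset.univ.filter (fun m : Fin (M n) => (m : ℕ) < d n), w n m : ℝ) : ℂ)) :
    (∀ i : (n : Fin (N + 1)) × Fin (M n), (i.2 : ℕ) < d i.1 →
      A.mulVec (U.mulVec (e i)) = U.mulVec (e i)) ∧
    (∀ w' : (n : Fin (N + 1)) → Fin (M n) → ℝ,
      (∀ n, Antitone (w' n)) → (∀ n m, 0 ≤ w' n m) →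
      (A * (U * (∑ i, (w' i.1 i.2 : ℂ) • vecMulVec (e i) (star (e i))) * Uᴴ)).trace =
        ((∑ n : Fin (N + 1),
          ∑ m ∈ Finset.univ.filter (fun m : Fin (M n) => (m : ℕ) < d n), w' n m : ℝ) : ℂ)) :=
  saturation_of_blockwise_bound_general A U hAblk hUblk hA hAh hU d hd e horth hblksupp w hstrict
    hsat
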